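/- For the optimization of the Cooperative Mixed NNC rate at the destination, the maximization over T ∈ Υ(V) can be replaced by maximization over all T ⊆ V without changing the value: for any T ⊆ V, if there exists A ⊆ T with Q_T(A) < 0, then removing the relays in A from T (i.e., not using their compressed descriptions) does not decrease, and in fact improves, the resulting minimum min_{S⊆T} R_T(S); hence the maximum over all subsets T ⊆ V equals the maximum restricted to T ∈ Υ(V) = {T ⊆ V : Q_T(S) ≥ 0 for all S ⊆ T}. -/

import Mathlib

/-!
STATEMENT 3: In the optimization of the Cooperative Mixed NNC rate at the destination,
the maximization over `T ∈ Υ(V)` can be replaced by maximization over all `T ⊆ V`: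
for any `T ⊆ V`, if some `A ⊆ T` has `Q_T(A) < 0`, then removing the relays of `A`
from `T` (not using their compressed descriptions) does not decrease the minimum
`min_{S⊆T} R_T(S)`; hence
`max_{T ⊆ V} min_{S⊆T} R_T(S) = max_{T ∈ Υ(V)} min_{S⊆T} R_T(S)`,
where `Υ(V) = {T ⊆ V : Q_T(S) ≥ 0 for all S ⊆ T}`.
-/

set_option synthInstance.maxSize 1000
set_option synthInstance.maxHeartbeats 1000000
set_option maxHeartbeats 2000000

open Finset Real Filter

section Info

variable {Ω : Type} [Fintype Ω]

/-- Probability that the random variable `X` takes the value `a`, under the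
probability mass function `p` on the finite sample space `Ω`. -/
noncomputable def probOf {α : Type} [DecidableEq α] (p : Ω → ℝ) (X : Ω → α) (a : α) : ℝ :=
  ∑ ω : Ω, if X ω = a then p ω else 0

/-- Shannon entropy (in nats) of the random variable `X` under `p`. -/
noncomputable def ent {α : Type} [DecidableEq α] (p : Ω → ℝ) (X : Ω → α) : ℝ :=
  -∑ ω : Ω, p ω * Real.log (probOf p X (X ω))

/-- Conditional mutual information `I(X ; Y | Z)` under the pmf `p`. -/
noncomputable def condMI {α β γ : Type} [DecidableEq α] [DecidableEq β] [DecidableEq γ]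
    (p : Ω → ℝ) (X : Ω → α) (Y : Ω → β) (Z : Ω → γ) : ℝ :=
  ent p (fun ω => (X ω, Z ω)) + ent p (fun ω => (Y ω, Z ω))
    - ent p (fun ω => (X ω, Y ω, Z ω)) - ent p Z

end Info

/-- `f` is a probability mass function on the finite type `α`. -/
def IsPMF {α : Type} [Fintype α] (f : α → ℝ) : Prop :=
  (∀ a, 0 ≤ f a) ∧ ∑ a, f a = 1

/-- Restriction of a tuple `x` to the index set `S`, encoded with `Option`
(`some` on `S`, `none` outside); it carries exactly the information of
the sub-tuple `X_S = {X_i : i ∈ S}`. -/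
def mask {N : ℕ} {𝓐 : Fin N → Type} (S : Finset (Fin N)) (x : ∀ k, 𝓐 k) :
    ∀ k, Option (𝓐 k) :=
  fun k => if k ∈ S then some (x k) else none


section Network

variable {N : ℕ} {𝓠 𝓧 𝓨 : Type} {𝓧r 𝓩 𝓩h : Fin N → Type}
  [Fintype 𝓠] [DecidableEq 𝓠] [Fintype 𝓧] [DecidableEq 𝓧]
  [Fintype 𝓨] [DecidableEq 𝓨]
  [∀ k, Fintype (𝓧r k)] [∀ k, DecidableEq (𝓧r k)]
  [∀ k, Fintype (𝓩 k)] [∀ k, DecidableEq (𝓩 k)]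
  [∀ k, Fintype (𝓩h k)] [∀ k, DecidableEq (𝓩h k)]

/- Sample space: `ω = (q, x, x_N, z_N, ẑ_N, y₁)`. -/

/-- `R_T(S)` of Theorem 1 (with `Sᶜ = T ∖ S`):
`I(X X_{Vᶜ} X_S ; Ẑ_{Sᶜ} Y₁ | X_{Sᶜ} Q) − I(Z_S ; Ẑ_S | X X_{T∪Vᶜ} Ẑ_{Sᶜ} Y₁ Q)`. -/
noncomputable def Rdest
    (p : 𝓠 × 𝓧 × (∀ k, 𝓧r k) × (∀ k, 𝓩 k) × (∀ k, 𝓩h k) × 𝓨 → ℝ)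
    (V T S : Finset (Fin N)) : ℝ :=
  condMI p
    (fun ω => (ω.2.1, mask Vᶜ ω.2.2.1, mask S ω.2.2.1))
    (fun ω => (mask (T \ S) ω.2.2.2.2.1, ω.2.2.2.2.2))
    (fun ω => (mask (T \ S) ω.2.2.1, ω.1))
  - condMI p
    (fun ω => mask S ω.2.2.2.1)
    (fun ω => mask S ω.2.2.2.2.1)
    (fun ω => (ω.2.1, mask (T ∪ Vᶜ) ω.2.2.1, mask (T \ S) ω.2.2.2.2.1, ω.2.2.2.2.2, ω.1))

/-- `Q_T(S)` of Theorem 1: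
`I(X_S ; Ẑ_{Sᶜ} Y₁ | X X_{Sᶜ∪Vᶜ} Q) − I(Z_S ; Ẑ_S | X X_{T∪Vᶜ} Ẑ_{Sᶜ} Y₁ Q)`. -/
noncomputable def Qdest
    (p : 𝓠 × 𝓧 × (∀ k, 𝓧r k) × (∀ k, 𝓩 k) × (∀ k, 𝓩h k) × 𝓨 → ℝ)
    (V T S : Finset (Fin N)) : ℝ :=
  condMI p
    (fun ω => mask S ω.2.2.1)
    (fun ω => (mask (T \ S) ω.2.2.2.2.1, ω.2.2.2.2.2))
    (fun ω => (ω.2.1, mask ((T \ S) ∪ Vᶜ) ω.2.2.1, ω.1))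
  - condMI p
    (fun ω => mask S ω.2.2.2.1)
    (fun ω => mask S ω.2.2.2.2.1)
    (fun ω => (ω.2.1, mask (T ∪ Vᶜ) ω.2.2.1, mask (T \ S) ω.2.2.2.2.1, ω.2.2.2.2.2, ω.1))

/-- `R^{(k)}_{T_k}(S)` of Theorem 1 (with `Sᶜ = T_k ∖ S`):
`I(X ; Ẑ_{T_k} Z_k | X_{Vᶜ} X_{T_k} Q) + I(X_S ; Z_k | X_{Vᶜ∪Sᶜ} Q)
  − I(Ẑ_S ; Z_S | X_{Vᶜ∪T_k} Ẑ_{Sᶜ} Z_k Q)`. -/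
noncomputable def Rrelay
    (p : 𝓠 × 𝓧 × (∀ k, 𝓧r k) × (∀ k, 𝓩 k) × (∀ k, 𝓩h k) × 𝓨 → ℝ)
    (V : Finset (Fin N)) (k : Fin N) (T S : Finset (Fin N)) : ℝ :=
  condMI p
    (fun ω => ω.2.1)
    (fun ω => (mask T ω.2.2.2.2.1, ω.2.2.2.1 k))
    (fun ω => (mask (Vᶜ ∪ T) ω.2.2.1, ω.1))
  + condMI p
    (fun ω => mask S ω.2.2.1)
    (fun ω => ω.2.2.2.1 k)
    (fun ω => (mask (Vᶜ ∪ (T \ S)) ω.2.2.1, ω.1))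
  - condMI p
    (fun ω => mask S ω.2.2.2.2.1)
    (fun ω => mask S ω.2.2.2.1)
    (fun ω => (mask (Vᶜ ∪ T) ω.2.2.1, mask (T \ S) ω.2.2.2.2.1, ω.2.2.2.1 k, ω.1))

/-- `Q^{(k)}_T(S)` of Theorem 1:
`I(X_S ; Z_k | X_{Vᶜ∪Sᶜ} Q) − I(Ẑ_S ; Z_S | X X_{Vᶜ∪T} Ẑ_{Sᶜ} Z_k Q)`. -/
noncomputable def Qrelay
    (p : 𝓠 × 𝓧 × (∀ k, 𝓧r k) × (∀ k, 𝓩 k) × (∀ k, 𝓩h k) × 𝓨 → ℝ)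
    (V : Finset (Fin N)) (k : Fin N) (T S : Finset (Fin N)) : ℝ :=
  condMI p
    (fun ω => mask S ω.2.2.1)
    (fun ω => ω.2.2.2.1 k)
    (fun ω => (mask (Vᶜ ∪ (T \ S)) ω.2.2.1, ω.1))
  - condMI p
    (fun ω => mask S ω.2.2.2.2.1)
    (fun ω => mask S ω.2.2.2.1)
    (fun ω => (ω.2.1, mask (Vᶜ ∪ T) ω.2.2.1, mask (T \ S) ω.2.2.2.2.1, ω.2.2.2.1 k, ω.1))

/-- The admissible joint distribution
`P_Q P_{X X_{Vᶜ}|Q} P_{Y₁ Z_N|X X_N} ∏_{j∈V} P_{X_j|Q} P_{Ẑ_j|X_j Z_j Q}` of the class `𝒫`. -/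
noncomputable def jointDist (V : Finset (Fin N))
    (W : 𝓧 → (∀ k, 𝓧r k) → ((∀ k, 𝓩 k) × 𝓨) → ℝ)
    (pQ : 𝓠 → ℝ)
    (pS : 𝓠 → 𝓧 × (∀ k : {k : Fin N // k ∉ V}, 𝓧r k.1) → ℝ)
    (pXj : ∀ j : Fin N, 𝓠 → 𝓧r j → ℝ)
    (pZh : ∀ j : Fin N, 𝓠 → 𝓧r j → 𝓩 j → 𝓩h j → ℝ) :
    𝓠 × 𝓧 × (∀ k, 𝓧r k) × (∀ k, 𝓩 k) × (∀ k, 𝓩h k) × 𝓨 → ℝ :=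
  fun ω =>
    pQ ω.1 * pS ω.1 (ω.2.1, fun k => ω.2.2.1 k.1)
      * (∏ j ∈ V, pXj j ω.1 (ω.2.2.1 j))
      * W ω.2.1 ω.2.2.1 (ω.2.2.2.1, ω.2.2.2.2.2)
      * ∏ j ∈ V, pZh j ω.1 (ω.2.2.1 j) (ω.2.2.2.1 j) (ω.2.2.2.2.1 j)

/-- The destination-decoding term
`max_{T ∈ Υ(V)} min_{S ⊆ T} R_T(S)`. -/
noncomputable def destRate
    (p : 𝓠 × 𝓧 × (∀ k, 𝓧r k) × (∀ k, 𝓩 k) × (∀ k, 𝓩h k) × 𝓨 → ℝ)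
    (V : Finset (Fin N)) : ℝ :=
  ⨆ T : {T : Finset (Fin N) // T ⊆ V ∧ ∀ S ⊆ T, 0 ≤ Qdest p V T S},
    ⨅ S : {S : Finset (Fin N) // S ⊆ T.1}, Rdest p V T.1 S.1

/-- The relay-`k`-decoding term
`max_{T_k ∈ Υ_k(V)} min_{S ⊆ T_k} R^{(k)}_{T_k}(S)`. -/
noncomputable def relayRate
    (p : 𝓠 × 𝓧 × (∀ k, 𝓧r k) × (∀ k, 𝓩 k) × (∀ k, 𝓩h k) × 𝓨 → ℝ)
    (V : Finset (Fin N)) (k : Fin N) : ℝ :=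
  ⨆ T : {T : Finset (Fin N) // T ⊆ V ∧ ∀ S ⊆ T, 0 ≤ Qrelay p V k T S},
    ⨅ S : {S : Finset (Fin N) // S ⊆ T.1}, Rrelay p V k T.1 S.1

end Network

/-- A block code of length `n` with `M` messages for the memoryless unicast network
with `N` relays: an encoder, causal relay functions, and a decoder. -/
structure NetCode {N : ℕ} (𝓧 : Type) (𝓧r 𝓩 : Fin N → Type) (𝓨 : Type) (n M : ℕ) where
  enc : Fin M → Fin n → 𝓧
  relay : ∀ (k : Fin N) (i : Fin n), (Fin i.1 → 𝓩 k) → 𝓧r k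
  dec : (Fin n → 𝓨) → Fin M

section Coding

variable {N : ℕ} {𝓧 𝓨 : Type} {𝓧r 𝓩 : Fin N → Type}
  [Fintype 𝓧] [Fintype 𝓨] [DecidableEq 𝓨]
  [∀ k, Fintype (𝓧r k)] [∀ k, Fintype (𝓩 k)] [∀ k, DecidableEq (𝓩 k)]

/-- Average error probability of a code over the `n`-fold memoryless extension of the
network `W = P_{Y₁ Z_N | X X_N}`, with the relay inputs produced causally. -/
noncomputable def avgErr {n M : ℕ}
    (W : 𝓧 → (∀ k, 𝓧r k) → ((∀ k, 𝓩 k) × 𝓨) → ℝ)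
    (C : NetCode 𝓧 𝓧r 𝓩 𝓨 n M) : ℝ :=
  (M : ℝ)⁻¹ * ∑ w : Fin M, ∑ zs : Fin n → ∀ k, 𝓩 k, ∑ ys : Fin n → 𝓨,
    (∏ i : Fin n,
      W (C.enc w i)
        (fun k => C.relay k i (fun j => zs ⟨j.1, j.2.trans i.2⟩ k))
        (zs i, ys i))
    * (if C.dec ys = w then 0 else 1)

/-- `R` is an achievable rate for the unicast network `W`: there are codes of
arbitrarily large blocklength with `≈ 2^{nR}` messages and vanishing
average error probability. -/
def AchievableRate
    (W : 𝓧 → (∀ k, 𝓧r k) → ((∀ k, 𝓩 k) × 𝓨) → ℝ) (R : ℝ) : Prop :=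
  ∀ ε > (0 : ℝ), ∃ (n M : ℕ) (C : NetCode 𝓧 𝓧r 𝓩 𝓨 n M),
    0 < n ∧ R - ε ≤ Real.log M / n ∧ avgErr W C ≤ ε

end Coding

/-!
For `S ⊆ T ∖ A` one has `R_T(S ∪ A) ≤ R_{T∖A}(S) + Q_T(A)`: once the masked tuples are regrouped,
both sides are chain-rule expansions of the same conditional mutual informations, up to two
nonnegative terms. So if `Q_T(A) < 0`, each `R_{T∖A}(S)` exceeds `R_T(S ∪ A)`, whence
`min_{S ⊆ T} R_T(S) ≤ min_{S ⊆ T∖A} R_{T∖A}(S)`. As `Q_T(∅) = 0`, such an `A` is nonempty, and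
removing it repeatedly (strong induction on `T`) ends in some `T' ∈ Υ(V)` that is at least as
good as `T`.
-/

section InformationMeasures

variable {Ω α β γ δ : Type} [Fintype Ω]
  [DecidableEq α] [DecidableEq β] [DecidableEq γ] [DecidableEq δ] {p : Ω → ℝ}

noncomputable def atomProb (p : Ω → ℝ) (X : Ω → α) (ω : Ω) : ℝ :=
  probOf p X (X ω)

lemma probOf_eq_sum_filter (X : Ω → α) (a : α) : probOf p X a = ∑ ω with X ω = a, p ω :=
  (sum_filter _ _).symm

lemma le_atomProb (hp : ∀ ω, 0 ≤ p ω) (X : Ω → α) (ω : Ω) : p ω ≤ atomProb p X ω := by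
  rw [atomProb, probOf_eq_sum_filter]
  exact single_le_sum (fun ω _ => hp ω) (by simp)

lemma probOf_nonneg (hp : ∀ ω, 0 ≤ p ω) (X : Ω → α) (a : α) : 0 ≤ probOf p X a := by
  rw [probOf_eq_sum_filter]
  exact sum_nonneg fun ω _ => hp ω

lemma atomProb_congr {X : Ω → α} {Y : Ω → β} {ω : Ω}
    (h : ∀ ω', X ω' = X ω ↔ Y ω' = Y ω) : atomProb p X ω = atomProb p Y ω := by
  simp only [atomProb, probOf_eq_sum_filter, h]

lemma ent_congr {X : Ω → α} {Y : Ω → β} (h : ∀ ω ω', X ω = X ω' ↔ Y ω = Y ω') :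
    ent p X = ent p Y := by
  simp only [ent]
  congr 1
  exact sum_congr rfl fun ω _ => congrArg (p ω * log ·) (atomProb_congr fun ω' => h ω' ω)

lemma condMI_congr {α' β' γ' : Type} [DecidableEq α'] [DecidableEq β'] [DecidableEq γ']
    {X : Ω → α} {Y : Ω → β} {Z : Ω → γ} {X' : Ω → α'} {Y' : Ω → β'} {Z' : Ω → γ'}
    (hX : ∀ ω ω', X ω = X ω' ↔ X' ω = X' ω') (hY : ∀ ω ω', Y ω = Y ω' ↔ Y' ω = Y' ω')
    (hZ : ∀ ω ω', Z ω = Z ω' ↔ Z' ω = Z' ω') :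
    condMI p X Y Z = condMI p X' Y' Z' := by
  have pair {ι κ ι' κ' : Type} {U : Ω → ι} {U' : Ω → ι'} {W : Ω → κ} {W' : Ω → κ'}
      (hU : ∀ ω ω', U ω = U ω' ↔ U' ω = U' ω') (hW : ∀ ω ω', W ω = W ω' ↔ W' ω = W' ω') :
      ∀ ω ω', (U ω, W ω) = (U ω', W ω') ↔ (U' ω, W' ω) = (U' ω', W' ω') := fun ω ω' => by
    simp only [Prod.ext_iff, hU ω ω', hW ω ω']
  simp only [condMI]
  rw [ent_congr (pair hX hZ), ent_congr (pair hY hZ), ent_congr (pair hX (pair hY hZ)),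
    ent_congr hZ]

lemma condMI_comm (X : Ω → α) (Y : Ω → β) (Z : Ω → γ) :
    condMI p X Y Z = condMI p Y X Z := by
  have : ent p (fun ω => (X ω, Y ω, Z ω)) = ent p (fun ω => (Y ω, X ω, Z ω)) :=
    ent_congr fun ω ω' => by simp only [Prod.ext_iff]; tauto
  simp only [condMI, this]
  ring

lemma condMI_pair_left (X : Ω → α) (W : Ω → δ) (Y : Ω → β) (Z : Ω → γ) :
    condMI p (fun ω => (X ω, W ω)) Y Z
      = condMI p X Y Z + condMI p W Y (fun ω => (X ω, Z ω)) := by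
  have h₁ : ent p (fun ω => (W ω, X ω, Z ω)) = ent p (fun ω => ((X ω, W ω), Z ω)) :=
    ent_congr fun ω ω' => by simp only [Prod.ext_iff]; tauto
  have h₂ : ent p (fun ω => (Y ω, X ω, Z ω)) = ent p (fun ω => (X ω, Y ω, Z ω)) :=
    ent_congr fun ω ω' => by simp only [Prod.ext_iff]; tauto
  have h₃ : ent p (fun ω => (W ω, Y ω, X ω, Z ω)) = ent p (fun ω => ((X ω, W ω), Y ω, Z ω)) :=
    ent_congr fun ω ω' => by simp only [Prod.ext_iff]; tauto
  simp only [condMI, h₁, h₂, h₃]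
  ring

lemma condMI_pair_right (X : Ω → α) (Y : Ω → β) (W : Ω → δ) (Z : Ω → γ) :
    condMI p X (fun ω => (Y ω, W ω)) Z
      = condMI p X Y Z + condMI p X W (fun ω => (Y ω, Z ω)) := by
  rw [condMI_comm, condMI_pair_left, condMI_comm Y, condMI_comm W]

lemma condMI_pair_left_comm (X : Ω → α) (W : Ω → δ) (Y : Ω → β) (Z : Ω → γ) :
    condMI p (fun ω => (X ω, W ω)) Y Z = condMI p (fun ω => (W ω, X ω)) Y Z :=
  condMI_congr (fun ω ω' => by simp only [Prod.ext_iff]; tauto) (fun _ _ => Iff.rfl)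
    (fun _ _ => Iff.rfl)

lemma condMI_add_condMI_comm (X : Ω → α) (W : Ω → δ) (Y : Ω → β) (Z : Ω → γ) :
    condMI p X Y Z + condMI p W Y (fun ω => (X ω, Z ω))
      = condMI p W Y Z + condMI p X Y (fun ω => (W ω, Z ω)) := by
  rw [← condMI_pair_left, ← condMI_pair_left, condMI_pair_left_comm]

lemma condMI_eq_zero_of_left_const {X : Ω → α} (hX : ∀ ω ω', X ω = X ω') (Y : Ω → β)
    (Z : Ω → γ) : condMI p X Y Z = 0 := by
  have h₁ : ent p (fun ω => (X ω, Z ω)) = ent p Z :=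
    ent_congr fun ω ω' => by simp [hX ω ω']
  have h₂ : ent p (fun ω => (X ω, Y ω, Z ω)) = ent p (fun ω => (Y ω, Z ω)) :=
    ent_congr fun ω ω' => by simp [hX ω ω']
  simp only [condMI, h₁, h₂]
  ring

lemma sum_mul_comp_eq_sum_image (X : Ω → α) (g : α → ℝ) :
    ∑ ω, p ω * g (X ω) = ∑ a ∈ univ.image X, probOf p X a * g a := by
  rw [← sum_fiberwise_of_maps_to (fun ω _ => mem_image_of_mem X (mem_univ ω))]
  refine sum_congr rfl fun a _ => ?_
  rw [probOf_eq_sum_filter, sum_mul]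
  exact sum_congr rfl fun ω hω => by rw [(mem_filter.1 hω).2]

lemma sum_image_probOf (X : Ω → α) : ∑ a ∈ univ.image X, probOf p X a = ∑ ω, p ω := by
  simpa using (sum_mul_comp_eq_sum_image (p := p) X fun _ => 1).symm

lemma sum_image_probOf_pair (X : Ω → α) (Z : Ω → γ) (c : γ) :
    ∑ a ∈ univ.image X, probOf p (fun ω => (X ω, Z ω)) (a, c) = probOf p Z c := by
  simp only [probOf_eq_sum_filter, Prod.ext_iff]
  simp_rw [and_comm (a := X _ = _), ← filter_filter]
  exact sum_fiberwise_of_maps_to (fun ω _ => mem_image_of_mem X (mem_univ ω)) p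

lemma condMI_eq_sum (X : Ω → α) (Y : Ω → β) (Z : Ω → γ) :
    condMI p X Y Z = ∑ ω, p ω * (log (atomProb p (fun ω => (X ω, Y ω, Z ω)) ω)
      + log (atomProb p Z ω) - log (atomProb p (fun ω => (X ω, Z ω)) ω)
      - log (atomProb p (fun ω => (Y ω, Z ω)) ω)) := by
  simp only [condMI, ent, atomProb, mul_add, mul_sub, sum_add_distrib, sum_sub_distrib]
  ring

lemma sum_mul_atomProb_ratio_le (hp : ∀ ω, 0 ≤ p ω) (X : Ω → α) (Y : Ω → β) (Z : Ω → γ) :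
    ∑ ω, p ω * (atomProb p (fun ω => (X ω, Z ω)) ω * atomProb p (fun ω => (Y ω, Z ω)) ω
      / (atomProb p (fun ω => (X ω, Y ω, Z ω)) ω * atomProb p Z ω)) ≤ ∑ ω, p ω := by
  set U := fun ω => (X ω, Y ω, Z ω)
  set q : α × β × γ → ℝ := fun v =>
    probOf p (fun ω => (X ω, Z ω)) (v.1, v.2.2) * probOf p (fun ω => (Y ω, Z ω)) (v.2.1, v.2.2)
  have hq : ∀ v, 0 ≤ q v / probOf p Z v.2.2 := fun v => by
    have := probOf_nonneg hp Z v.2.2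
    have := probOf_nonneg hp (fun ω => (X ω, Z ω)) (v.1, v.2.2)
    have := probOf_nonneg hp (fun ω => (Y ω, Z ω)) (v.2.1, v.2.2)
    positivity
  calc _ = ∑ v ∈ univ.image U, probOf p U v * (q v / (probOf p U v * probOf p Z v.2.2)) :=
        sum_mul_comp_eq_sum_image U fun v => q v / (probOf p U v * probOf p Z v.2.2)
    _ ≤ ∑ v ∈ univ.image U, q v / probOf p Z v.2.2 := by
        refine sum_le_sum fun v _ => ?_
        rcases (probOf_nonneg hp U v).eq_or_lt with h0 | hpos
        · simpa [← h0] using hq v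
        · rw [← mul_div_assoc, mul_div_mul_left _ _ hpos.ne']
    _ ≤ ∑ v ∈ univ.image X ×ˢ univ.image Y ×ˢ univ.image Z, q v / probOf p Z v.2.2 := by
        refine sum_le_sum_of_subset_of_nonneg ?_ fun v _ _ => hq v
        intro v
        simp only [U, mem_image, mem_univ, true_and, mem_product]
        rintro ⟨ω, rfl⟩
        exact ⟨⟨ω, rfl⟩, ⟨ω, rfl⟩, ⟨ω, rfl⟩⟩
    _ = ∑ c ∈ univ.image Z, (∑ a ∈ univ.image X, probOf p (fun ω => (X ω, Z ω)) (a, c))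
          * (∑ b ∈ univ.image Y, probOf p (fun ω => (Y ω, Z ω)) (b, c)) / probOf p Z c := by
        simp only [sum_product, q, sum_mul_sum, sum_div]
        exact (sum_congr rfl fun _ _ => sum_comm).trans sum_comm
    _ = ∑ c ∈ univ.image Z, probOf p Z c := by
        simp only [sum_image_probOf_pair, mul_self_div_self]
    _ = ∑ ω, p ω := sum_image_probOf Z

/-- Gibbs' inequality, in the form `-log t ≥ 1 - t` summed against `p`. -/
lemma condMI_nonneg (hp : ∀ ω, 0 ≤ p ω) (X : Ω → α) (Y : Ω → β) (Z : Ω → γ) :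
    0 ≤ condMI p X Y Z := by
  set Pxyz := atomProb p (fun ω => (X ω, Y ω, Z ω))
  set Pxz := atomProb p (fun ω => (X ω, Z ω))
  set Pyz := atomProb p (fun ω => (Y ω, Z ω))
  set Pz := atomProb p Z
  have pointwise : ∀ ω, p ω * (1 - Pxz ω * Pyz ω / (Pxyz ω * Pz ω))
      ≤ p ω * (log (Pxyz ω) + log (Pz ω) - log (Pxz ω) - log (Pyz ω)) := fun ω => by
    rcases (hp ω).eq_or_lt with h0 | hpos
    · simp [← h0]
    have h₁ : 0 < Pxyz ω := hpos.trans_le (le_atomProb hp _ ω)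
    have h₂ : 0 < Pz ω := hpos.trans_le (le_atomProb hp _ ω)
    have h₃ : 0 < Pxz ω := hpos.trans_le (le_atomProb hp _ ω)
    have h₄ : 0 < Pyz ω := hpos.trans_le (le_atomProb hp _ ω)
    have hlog : log (Pxz ω * Pyz ω / (Pxyz ω * Pz ω))
        = log (Pxz ω) + log (Pyz ω) - log (Pxyz ω) - log (Pz ω) := by
      rw [log_div (by positivity) (by positivity), log_mul h₃.ne' h₄.ne', log_mul h₁.ne' h₂.ne']
      ring
    have := log_le_sub_one_of_pos (by positivity : 0 < Pxz ω * Pyz ω / (Pxyz ω * Pz ω))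
    nlinarith
  calc 0 ≤ ∑ ω, p ω - ∑ ω, p ω * (Pxz ω * Pyz ω / (Pxyz ω * Pz ω)) :=
        sub_nonneg.2 (sum_mul_atomProb_ratio_le hp X Y Z)
    _ = ∑ ω, p ω * (1 - Pxz ω * Pyz ω / (Pxyz ω * Pz ω)) := by
        simp only [mul_sub, mul_one, sum_sub_distrib]
    _ ≤ _ := sum_le_sum fun ω _ => pointwise ω
    _ = condMI p X Y Z := (condMI_eq_sum X Y Z).symm

lemma condMI_le_condMI_pair_left (hp : ∀ ω, 0 ≤ p ω) (X : Ω → α) (W : Ω → δ) (Y : Ω → β)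
    (Z : Ω → γ) : condMI p X Y Z ≤ condMI p (fun ω => (X ω, W ω)) Y Z := by
  rw [condMI_pair_left]
  linarith [condMI_nonneg hp W Y fun ω => (X ω, Z ω)]

lemma add_condMI_le_condMI_pair_pair {ε : Type} [DecidableEq ε] (hp : ∀ ω, 0 ≤ p ω)
    (X : Ω → α) (W : Ω → δ) (Y : Ω → β) (U : Ω → ε) (Z : Ω → γ) :
    condMI p X Y Z + condMI p W U (fun ω => (Y ω, Z ω))
      ≤ condMI p (fun ω => (X ω, W ω)) (fun ω => (Y ω, U ω)) Z := by
  rw [condMI_pair_right, condMI_pair_left_comm X W U]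
  exact add_le_add (condMI_le_condMI_pair_left hp X W Y Z)
    (condMI_le_condMI_pair_left hp W X U _)

/-- With `P = X X_{Vᶜ} X_S`, `O = Ẑ_{Sᶜ} Y₁`, `R = X_{Sᶜ} Q` and `Sᶜ = (T ∖ A) ∖ S`, the left side is
`R_T(S ∪ A)` and the two brackets are `R_{T∖A}(S)` and `Q_T(A)`. -/
lemma condMI_pair_sub_condMI_le {ε ζ η θ : Type} [DecidableEq ε] [DecidableEq ζ] [DecidableEq η]
    [DecidableEq θ] (hp : ∀ ω, 0 ≤ p ω) (P : Ω → α) (XA : Ω → β) (O : Ω → γ) (R : Ω → δ)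
    (ZS : Ω → ε) (ZA : Ω → ζ) (HS : Ω → η) (HA : Ω → θ) :
    condMI p (fun ω => (P ω, XA ω)) O R
        - condMI p (fun ω => (ZS ω, ZA ω)) (fun ω => (HS ω, HA ω))
          (fun ω => (XA ω, O ω, P ω, R ω))
      ≤ (condMI p P O R - condMI p ZS HS (fun ω => (O ω, P ω, R ω)))
        + (condMI p XA (fun ω => (O ω, HS ω)) (fun ω => (P ω, R ω))
          - condMI p ZA HA (fun ω => (HS ω, XA ω, O ω, P ω, R ω))) := by
  have h₁ := condMI_pair_left (p := p) P XA O R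
  have h₂ := condMI_pair_right (p := p) XA O HS (fun ω => (P ω, R ω))
  have h₃ := condMI_add_condMI_comm (p := p) XA ZS HS (fun ω => (O ω, P ω, R ω))
  have h₄ := add_condMI_le_condMI_pair_pair hp ZS ZA HS HA (fun ω => (XA ω, O ω, P ω, R ω))
  have h₅ := condMI_nonneg hp XA HS (fun ω => (ZS ω, O ω, P ω, R ω))
  linarith

end InformationMeasures

section Masks

variable {N : ℕ} {𝓐 : Fin N → Type}

lemma mask_eq_mask_iff {S : Finset (Fin N)} {x x' : ∀ k, 𝓐 k} :
    mask S x = mask S x' ↔ ∀ k ∈ S, x k = x' k := by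
  simp only [funext_iff, mask]
  refine forall_congr' fun k => ?_
  by_cases hk : k ∈ S <;> simp [hk]

lemma mask_union_eq_iff {S A : Finset (Fin N)} {x x' : ∀ k, 𝓐 k} :
    mask (S ∪ A) x = mask (S ∪ A) x' ↔ mask S x = mask S x' ∧ mask A x = mask A x' := by
  simp only [mask_eq_mask_iff, mem_union, or_imp, forall_and]

lemma mask_empty_eq (x x' : ∀ k, 𝓐 k) : mask (∅ : Finset (Fin N)) x = mask ∅ x' := by
  simp [mask_eq_mask_iff]

end Masks

lemma jointDist_nonneg {N : ℕ} {𝓠 𝓧 𝓨 : Type} {𝓧r 𝓩 𝓩h : Fin N → Type} {V : Finset (Fin N)}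
    {W : 𝓧 → (∀ k, 𝓧r k) → ((∀ k, 𝓩 k) × 𝓨) → ℝ}
    {pQ : 𝓠 → ℝ} {pS : 𝓠 → 𝓧 × (∀ k : {k : Fin N // k ∉ V}, 𝓧r k.1) → ℝ}
    {pXj : ∀ j : Fin N, 𝓠 → 𝓧r j → ℝ} {pZh : ∀ j : Fin N, 𝓠 → 𝓧r j → 𝓩 j → 𝓩h j → ℝ}
    (hW : ∀ x xs v, 0 ≤ W x xs v) (hpQ : ∀ q, 0 ≤ pQ q) (hpS : ∀ q v, 0 ≤ pS q v)
    (hpXj : ∀ j q xj, 0 ≤ pXj j q xj) (hpZh : ∀ j q xj zj zhj, 0 ≤ pZh j q xj zj zhj)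
    (ω : 𝓠 × 𝓧 × (∀ k, 𝓧r k) × (∀ k, 𝓩 k) × (∀ k, 𝓩h k) × 𝓨) :
    0 ≤ jointDist V W pQ pS pXj pZh ω := by
  unfold jointDist
  have := prod_nonneg fun j (_ : j ∈ V) => hpXj j ω.1 (ω.2.2.1 j)
  have := prod_nonneg fun j (_ : j ∈ V) => hpZh j ω.1 (ω.2.2.1 j) (ω.2.2.2.1 j) (ω.2.2.2.2.1 j)
  have := hpQ ω.1
  have := hpS ω.1 (ω.2.1, fun k => ω.2.2.1 k.1)
  have := hW ω.2.1 ω.2.2.1 (ω.2.2.2.1, ω.2.2.2.2.2)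
  positivity

section Network

variable {N : ℕ} {𝓠 𝓧 𝓨 : Type} {𝓧r 𝓩 𝓩h : Fin N → Type}
  [Fintype 𝓠] [DecidableEq 𝓠] [Fintype 𝓧] [DecidableEq 𝓧]
  [Fintype 𝓨] [DecidableEq 𝓨]
  [∀ k, Fintype (𝓧r k)] [∀ k, DecidableEq (𝓧r k)]
  [∀ k, Fintype (𝓩 k)] [∀ k, DecidableEq (𝓩 k)]
  [∀ k, Fintype (𝓩h k)] [∀ k, DecidableEq (𝓩h k)]
  {p : 𝓠 × 𝓧 × (∀ k, 𝓧r k) × (∀ k, 𝓩 k) × (∀ k, 𝓩h k) × 𝓨 → ℝ}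

lemma Qdest_empty (V T : Finset (Fin N)) : Qdest p V T ∅ = 0 := by
  simp only [Qdest, condMI_eq_zero_of_left_const (fun _ _ => mask_empty_eq _ _), sub_zero]

lemma Rdest_union_le_Rdest_sdiff_add_Qdest (hp : ∀ ω, 0 ≤ p ω) {V T A S : Finset (Fin N)}
    (hA : A ⊆ T) (hS : S ⊆ T \ A) :
    Rdest p V T (S ∪ A) ≤ Rdest p V (T \ A) S + Qdest p V T A := by
  obtain ⟨Sc, hSc⟩ : ∃ Sc, (T \ A) \ S = Sc := ⟨_, rfl⟩
  have hT : T \ (S ∪ A) = Sc := by rw [← hSc, sdiff_sdiff_left, sup_eq_union, union_comm]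
  have hB : T \ A = S ∪ Sc := by rw [← hSc, union_sdiff_of_subset hS]
  have hBV : T \ A ∪ Vᶜ = Vᶜ ∪ (S ∪ Sc) := by rw [hB, union_comm]
  have hTV : T ∪ Vᶜ = A ∪ (Vᶜ ∪ (S ∪ Sc)) := by
    rw [← hBV, ← union_assoc, union_sdiff_of_subset hA]
  refine le_of_eq_of_le ?_ ((condMI_pair_sub_condMI_le hp
      (fun ω => (ω.2.1, mask Vᶜ ω.2.2.1, mask S ω.2.2.1)) (fun ω => mask A ω.2.2.1)
      (fun ω => (mask Sc ω.2.2.2.2.1, ω.2.2.2.2.2)) (fun ω => (mask Sc ω.2.2.1, ω.1))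
      (fun ω => mask S ω.2.2.2.1) (fun ω => mask A ω.2.2.2.1)
      (fun ω => mask S ω.2.2.2.2.1) (fun ω => mask A ω.2.2.2.2.1)).trans_eq ?_)
  · rw [Rdest, hT]
    congr 1 <;> apply condMI_congr <;> intro ω ω' <;>
      simp only [Prod.ext_iff, hTV, mask_union_eq_iff] <;> tauto
  · rw [Rdest, Qdest, hSc, hBV, hB, hTV]
    congr 1 <;> congr 1 <;> apply condMI_congr <;> intro ω ω' <;>
      simp only [Prod.ext_iff, mask_union_eq_iff] <;> tauto

lemma iInf_Rdest_le_iInf_Rdest_sdiff (hp : ∀ ω, 0 ≤ p ω) {V T A : Finset (Fin N)} (hA : A ⊆ T)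
    (hQ : Qdest p V T A ≤ 0) :
    (⨅ S : {S : Finset (Fin N) // S ⊆ T}, Rdest p V T S.1)
      ≤ ⨅ S : {S : Finset (Fin N) // S ⊆ T \ A}, Rdest p V (T \ A) S.1 := by
  have : Nonempty {S : Finset (Fin N) // S ⊆ T \ A} := ⟨⟨∅, empty_subset _⟩⟩
  refine le_ciInf fun S => ?_
  have hSA : S.1 ∪ A ⊆ T := union_subset (S.2.trans sdiff_subset) hA
  have hbdd : BddBelow (Set.range fun S : {S : Finset (Fin N) // S ⊆ T} => Rdest p V T S.1) :=
    (Set.finite_range _).bddBelow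
  calc (⨅ S : {S : Finset (Fin N) // S ⊆ T}, Rdest p V T S.1) ≤ Rdest p V T (S.1 ∪ A) :=
        ciInf_le hbdd ⟨_, hSA⟩
    _ ≤ Rdest p V (T \ A) S.1 + Qdest p V T A := Rdest_union_le_Rdest_sdiff_add_Qdest hp hA S.2
    _ ≤ Rdest p V (T \ A) S.1 := by linarith

lemma exists_subset_forall_Qdest_nonneg (hp : ∀ ω, 0 ≤ p ω) (V T : Finset (Fin N)) :
    ∃ T' ⊆ T, (∀ S ⊆ T', 0 ≤ Qdest p V T' S) ∧
      (⨅ S : {S : Finset (Fin N) // S ⊆ T}, Rdest p V T S.1)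
        ≤ ⨅ S : {S : Finset (Fin N) // S ⊆ T'}, Rdest p V T' S.1 := by
  induction T using Finset.strongInduction with
  | H T ih =>
    by_cases hT : ∀ S ⊆ T, 0 ≤ Qdest p V T S
    · exact ⟨T, subset_rfl, hT, le_rfl⟩
    push Not at hT
    obtain ⟨A, hAT, hQA⟩ := hT
    have hA : A.Nonempty := nonempty_iff_ne_empty.2 fun h => by simp [h, Qdest_empty] at hQA
    obtain ⟨T', hT'T, hT', hle⟩ := ih (T \ A) (sdiff_ssubset hAT hA)
    exact ⟨T', hT'T.trans sdiff_subset, hT',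
      (iInf_Rdest_le_iInf_Rdest_sdiff hp hAT hQA.le).trans hle⟩

end Network

theorem max_over_all_T_eq_max_over_Gamma
    {N : ℕ} {𝓠 𝓧 𝓨 : Type} {𝓧r 𝓩 𝓩h : Fin N → Type}
    [Fintype 𝓠] [DecidableEq 𝓠] [Fintype 𝓧] [DecidableEq 𝓧]
    [Fintype 𝓨] [DecidableEq 𝓨]
    [∀ k, Fintype (𝓧r k)] [∀ k, DecidableEq (𝓧r k)]
    [∀ k, Fintype (𝓩 k)] [∀ k, DecidableEq (𝓩 k)]
    [∀ k, Fintype (𝓩h k)] [∀ k, DecidableEq (𝓩h k)]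
    (W : 𝓧 → (∀ k, 𝓧r k) → ((∀ k, 𝓩 k) × 𝓨) → ℝ)
    (hW : ∀ x xs, IsPMF (W x xs))
    (V : Finset (Fin N))
    (pQ : 𝓠 → ℝ)
    (pS : 𝓠 → 𝓧 × (∀ k : {k : Fin N // k ∉ V}, 𝓧r k.1) → ℝ)
    (pXj : ∀ j : Fin N, 𝓠 → 𝓧r j → ℝ)
    (pZh : ∀ j : Fin N, 𝓠 → 𝓧r j → 𝓩 j → 𝓩h j → ℝ)
    (hpQ : IsPMF pQ) (hpS : ∀ q, IsPMF (pS q))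
    (hpXj : ∀ j q, IsPMF (pXj j q))
    (hpZh : ∀ j q xj zj, IsPMF (pZh j q xj zj))
    (p : 𝓠 × 𝓧 × (∀ k, 𝓧r k) × (∀ k, 𝓩 k) × (∀ k, 𝓩h k) × 𝓨 → ℝ)
    (hp : p = jointDist V W pQ pS pXj pZh) :
    -- (a) dropping a subset `A` with `Q_T(A) < 0` does not decrease the minimum
    (∀ T ⊆ V, ∀ A ⊆ T, Qdest p V T A < 0 →
      (⨅ S : {S : Finset (Fin N) // S ⊆ T}, Rdest p V T S.1)
        ≤ ⨅ S : {S : Finset (Fin N) // S ⊆ T \ A}, Rdest p V (T \ A) S.1) ∧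
    -- (b) the unconstrained and the `Υ(V)`-constrained maximizations coincide
    (⨆ T : {T : Finset (Fin N) // T ⊆ V},
        ⨅ S : {S : Finset (Fin N) // S ⊆ T.1}, Rdest p V T.1 S.1)
      = ⨆ T : {T : Finset (Fin N) // T ⊆ V ∧ ∀ S ⊆ T, 0 ≤ Qdest p V T S},
          ⨅ S : {S : Finset (Fin N) // S ⊆ T.1}, Rdest p V T.1 S.1 := by
  have hp_nonneg : ∀ ω, 0 ≤ p ω := hp ▸ jointDist_nonneg (fun x xs => (hW x xs).1) hpQ.1
    (fun q => (hpS q).1) (fun j q => (hpXj j q).1) (fun j q xj zj => (hpZh j q xj zj).1)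
  refine ⟨fun T _ A hA hQ => iInf_Rdest_le_iInf_Rdest_sdiff hp_nonneg hA hQ.le, ?_⟩
  have : Nonempty {T : Finset (Fin N) // T ⊆ V} := ⟨⟨∅, empty_subset V⟩⟩
  have : Nonempty {T : Finset (Fin N) // T ⊆ V ∧ ∀ S ⊆ T, 0 ≤ Qdest p V T S} :=
    ⟨⟨∅, empty_subset V, fun S hS => by rw [subset_empty.1 hS, Qdest_empty]⟩⟩
  apply le_antisymm
  · refine ciSup_le fun T => ?_
    obtain ⟨T', hT'T, hT', hle⟩ := exists_subset_forall_Qdest_nonneg hp_nonneg V T.1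
    exact le_ciSup_of_le (Set.finite_range _).bddAbove ⟨T', hT'T.trans T.2, hT'⟩ hle
  · exact ciSup_le fun T => le_ciSup_of_le (Set.finite_range _).bddAbove ⟨T.1, T.2.1⟩ le_rfl
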